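/- arXiv:2401.01393 — 2 statements merged into one kernel-verified Lean document; each statement's English description precedes it below -/
import Mathlib

section
/- Let f be a holomorphic function on an open set U ⊆ ℂ, let a ∈ U be a simple zero of f (i.e., f(a) = 0 and f′(a) ≠ 0), and let z : [0, ∞) → U be a differentiable curve satisfying dz/dt = −f(z(t))/f′(z(t)) for all t (with f′(z(t)) ≠ 0 for all t) and z(t) → a as t → ∞. Then there exist constants C > 0 and t₀ ≥ 0 such that |z(t) − a| ≤ C·e^{−t} for all t ≥ t₀; that is, |z(t) − a| = O(e^{−t}) as t → ∞. -/
/-!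
Along the Newton flow, `d/dt f(z(t)) = f'(z(t)) · z'(t) = -f(z(t))`, so `f(z(t)) = e^{-t} f(z(0))`.
Near a simple zero `a`, `f w` is comparable to `w - a`, so `w - a = O(f w)`; since
`z(t) → a`, this gives `z(t) - a = O(f(z(t))) = O(e^{-t})`.
-/

open Filter Asymptotics Set Topology

theorem HasDerivAt.isBigO_sub_rev {𝕜 F : Type*} [NontriviallyNormedField 𝕜]
    [NormedAddCommGroup F] [NormedSpace 𝕜 F] {f : 𝕜 → F} {f' : F} {a : 𝕜}
    (hf : HasDerivAt f f' a) (hf' : f' ≠ 0) :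
    (· - a) =O[𝓝 a] (f · - f a) :=
  ((hf.isTheta_sub hf').isBigO_symm).comp_tendsto (tendsto_id.prodMk tendsto_const_pure)

theorem eq_exp_neg_smul_of_hasDerivWithinAt_neg {E : Type*} [NormedAddCommGroup E]
    [NormedSpace ℝ E] {g : ℝ → E}
    (hg : ∀ t, 0 ≤ t → HasDerivWithinAt g (-g t) (Ici 0) t) {t : ℝ} (ht : 0 ≤ t) :
    g t = Real.exp (-t) • g 0 := by
  have hderiv : ∀ s, 0 ≤ s → HasDerivWithinAt (fun s => Real.exp s • g s) 0 (Ici 0) s := by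
    intro s hs
    exact ((Real.hasDerivAt_exp s).hasDerivWithinAt.smul (hg s hs)).congr_deriv (by simp)
  have hconst := constant_of_has_deriv_right_zero
    (fun s hs => (hderiv s hs.1).continuousWithinAt.mono Icc_subset_Ici_self)
    (fun s hs => (hderiv s hs.1).mono (Ici_subset_Ici.2 hs.1)) t ⟨ht, le_rfl⟩
  rw [Real.exp_zero, one_smul] at hconst
  rw [← hconst, smul_smul, ← Real.exp_add, neg_add_cancel, Real.exp_zero, one_smul]

theorem hasDerivWithinAt_comp_of_newtonFlow {𝕜 : Type*} [NontriviallyNormedField 𝕜]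
    [NormedAlgebra ℝ 𝕜] {f : 𝕜 → 𝕜} {z : ℝ → 𝕜} {s : Set ℝ} {t : ℝ}
    (hf : DifferentiableAt 𝕜 f (z t)) (hne : deriv f (z t) ≠ 0)
    (hz : HasDerivWithinAt z (-(f (z t) / deriv f (z t))) s t) :
    HasDerivWithinAt (fun t => f (z t)) (-f (z t)) s t :=
  (hf.hasDerivAt.comp_hasDerivWithinAt t hz).congr_deriv (by field_simp)

/-- If `a` is a simple zero of a holomorphic function `f` on an open set `U ⊆ ℂ`, and
`z : [0, ∞) → U` solves the Newton flow `dz/dt = −f(z(t))/f′(z(t))` with `z(t) → a`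
as `t → ∞`, then `|z(t) − a| = O(e^{−t})`: there are `C > 0` and `t₀ ≥ 0` with
`|z(t) − a| ≤ C·e^{−t}` for all `t ≥ t₀`. -/
theorem newton_flow_rate_to_simple_zero
    (U : Set ℂ) (hU : IsOpen U) (f : ℂ → ℂ) (hf : DifferentiableOn ℂ f U)
    (a : ℂ) (ha : a ∈ U) (hfa : f a = 0) (hfa' : deriv f a ≠ 0)
    (z : ℝ → ℂ) (hmem : ∀ t : ℝ, 0 ≤ t → z t ∈ U)
    (hne : ∀ t : ℝ, 0 ≤ t → deriv f (z t) ≠ 0)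
    (hode : ∀ t : ℝ, 0 ≤ t →
      HasDerivWithinAt z (-(f (z t) / deriv f (z t))) (Set.Ici 0) t)
    (hlim : Tendsto z atTop (nhds a)) :
    ∃ C : ℝ, 0 < C ∧ ∃ t₀ : ℝ, 0 ≤ t₀ ∧
      ∀ t : ℝ, t₀ ≤ t → ‖z t - a‖ ≤ C * Real.exp (-t) := by
  have hflow : ∀ t, 0 ≤ t → f (z t) = Real.exp (-t) • f (z 0) := fun t ht =>
    eq_exp_neg_smul_of_hasDerivWithinAt_neg (g := fun t => f (z t)) (fun s hs =>
      hasDerivWithinAt_comp_of_newtonFlow (hf.differentiableAt (hU.mem_nhds (hmem s hs)))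
        (hne s hs) (hode s hs)) ht
  have hsimple : (· - a) =O[𝓝 a] f := by
    simpa [hfa] using (hf.differentiableAt (hU.mem_nhds ha)).hasDerivAt.isBigO_sub_rev hfa'
  have hdecay : (fun t => f (z t)) =O[atTop] (fun t => Real.exp (-t)) :=
    .of_bound ‖f (z 0)‖ <| (eventually_ge_atTop 0).mono fun t ht => by
      rw [hflow t ht, norm_smul, mul_comm]
  obtain ⟨C, hC, hbound⟩ := ((hsimple.comp_tendsto hlim).trans hdecay).exists_pos
  obtain ⟨T, hT⟩ := eventually_atTop.1 hbound.bound
  refine ⟨C, hC, max T 0, le_max_right _ _, fun t ht => ?_⟩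
  simpa [abs_of_pos (Real.exp_pos _)] using hT t (le_of_max_le_left ht)
end

section
/- Let f be a holomorphic function defined on a neighborhood of 0 in ℂ with f(0) = 0 and f′(0) ≠ 0, and define F(x, y) = |f(x + iy)|²/2. Then the Hessian ∇²F(z) is invertible for all z in some neighborhood of 0, and the Newton-flow vector field satisfies (∇²F(z))⁻¹ ∇F(z) = z + o(|z|) as z → 0; that is, the map z ↦ (∇²F(z))⁻¹ ∇F(z) − z is little-o of |z| as z → 0 (identifying ℝ² with ℂ). -/
/-!
The gradient of `F = ‖f‖² / 2` is `conj f' · f`, and its real derivative, the Hessian, is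
`v ↦ ‖f'‖² v + f · conj f'' · conj v`. At a zero of `f` this is multiplication by
`‖f'(0)‖² ≠ 0`, so the Hessian is invertible near `0` with locally bounded inverse. The Newton
residual `∇F(z) - ∇²F(z) z = conj f'(z) (f z - f'(z) z) - f z · conj f''(z) · conj z` is `o(z)`,
and applying the bounded inverse Hessian to it keeps it `o(z)`.
-/

open Filter Asymptotics Topology ComplexConjugate

noncomputable def mulAddMulConjCLM (p q : ℂ) : ℂ →L[ℝ] ℂ :=
  p • (1 : ℂ →L[ℝ] ℂ) + q • Complex.conjCLE.toContinuousLinearMap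

@[simp]
lemma mulAddMulConjCLM_apply (p q v : ℂ) : mulAddMulConjCLM p q v = p * v + q * conj v := rfl

lemma Filter.Tendsto.mulAddMulConjCLM {α : Type*} {l : Filter α} {p q : α → ℂ} {p₀ q₀ : ℂ}
    (hp : Tendsto p l (𝓝 p₀)) (hq : Tendsto q l (𝓝 q₀)) :
    Tendsto (fun x => mulAddMulConjCLM (p x) (q x)) l (𝓝 (mulAddMulConjCLM p₀ q₀)) :=
  (hp.smul_const _).add (hq.smul_const _)

lemma isUnit_mulAddMulConjCLM_zero {p : ℂ} (hp : p ≠ 0) : IsUnit (mulAddMulConjCLM p 0) := by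
  refine isUnit_iff_exists.mpr ⟨mulAddMulConjCLM p⁻¹ 0, ?_, ?_⟩ <;>
    ext v <;> simp [hp]

lemma HasDerivAt.hasGradientAt_norm_sq_div_two {f : ℂ → ℂ} {a z : ℂ} (hf : HasDerivAt f a z) :
    HasGradientAt (fun w => ‖f w‖ ^ 2 / 2) (conj a * f z) z := by
  rw [hasGradientAt_iff_hasFDerivAt]
  have h := (hf.hasFDerivAt.restrictScalars ℝ).norm_sq.mul_const (1 / 2 : ℝ)
  simp only [← div_eq_mul_one_div] at h
  refine h.congr_fderiv ?_
  ext v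
  simp only [smul_apply, ContinuousLinearMap.comp_apply, ContinuousLinearMap.coe_restrictScalars',
    ContinuousLinearMap.toSpanSingleton_apply, smul_eq_mul, coe_innerSL_apply, Complex.inner,
    InnerProductSpace.toDual_apply_apply, Complex.mul_re, Complex.mul_im, Complex.conj_re,
    Complex.conj_im, nsmul_eq_mul]
  ring

lemma HasDerivAt.hasFDerivAt_conj_mul {g h : ℂ → ℂ} {a b z : ℂ} (hg : HasDerivAt g a z)
    (hh : HasDerivAt h b z) :
    HasFDerivAt (fun w => conj (g w) * h w)
      (mulAddMulConjCLM (conj (g z) * b) (h z * conj a)) z := by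
  have hcg := Complex.conjCLE.toContinuousLinearMap.hasFDerivAt.comp z
    (hg.hasFDerivAt.restrictScalars ℝ)
  refine (hcg.mul (hh.hasFDerivAt.restrictScalars ℝ)).congr_fderiv ?_
  ext v
  simp only [add_apply, smul_apply, ContinuousLinearMap.comp_apply,
    ContinuousLinearMap.coe_restrictScalars', ContinuousLinearMap.toSpanSingleton_apply,
    smul_eq_mul, ContinuousLinearEquiv.coe_coe, Function.comp_apply, Complex.conjCLE_apply,
    map_mul, mulAddMulConjCLM_apply]
  ring

lemma Asymptotics.IsLittleO.ring_inverse_apply_sub {𝕜 E α : Type*} [NontriviallyNormedField 𝕜]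
    [NormedAddCommGroup E] [NormedSpace 𝕜 E] [CompleteSpace E] {l : Filter α}
    {L : α → E →L[𝕜] E} {L₀ : E →L[𝕜] E} {g u : α → E} (hL : Tendsto L l (𝓝 L₀))
    (hL₀ : IsUnit L₀) (h : (fun x => g x - L x (u x)) =o[l] u) :
    (fun x => Ring.inverse (L x) (g x) - u x) =o[l] u := by
  have hinv : Tendsto (fun x => Ring.inverse (L x)) l (𝓝 (Ring.inverse L₀)) := by
    have := NormedRing.inverse_continuousAt hL₀.unit
    rw [hL₀.unit_spec] at this
    exact this.tendsto.comp hL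
  obtain ⟨C, hC⟩ := hinv.norm.isBoundedUnder_le
  have hbdd : (fun x => Ring.inverse (L x) (g x - L x (u x))) =O[l] fun x => g x - L x (u x) := by
    refine IsBigO.of_bound C ?_
    filter_upwards [hC] with x hx
    exact (ContinuousLinearMap.le_opNorm _ _).trans (mul_le_mul_of_nonneg_right hx (norm_nonneg _))
  refine (hbdd.trans_isLittleO h).congr' ?_ EventuallyEq.rfl
  filter_upwards [hL.eventually (Units.isOpen.mem_nhds hL₀)] with x hx
  rw [map_sub, ← ContinuousLinearMap.comp_apply, ← ContinuousLinearMap.mul_def,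
    Ring.inverse_mul_cancel _ hx, ContinuousLinearMap.one_def, ContinuousLinearMap.id_apply]

lemma isLittleO_sub_deriv_mul_self {𝕜 : Type*} [NontriviallyNormedField 𝕜] {f : 𝕜 → 𝕜}
    (hf : DifferentiableAt 𝕜 f 0) (hf' : ContinuousAt (deriv f) 0) (hf0 : f 0 = 0) :
    (fun z => f z - deriv f z * z) =o[𝓝 0] fun z => z := by
  have hlin : (fun z => f z - deriv f 0 * z) =o[𝓝 0] fun z => z := by
    simpa [hf0, mul_comm] using hasDerivAt_iff_isLittleO.mp hf.hasDerivAt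
  have hvar : (fun z => (deriv f z - deriv f 0) * z) =o[𝓝 0] fun z => z := by
    have : (fun z => deriv f z - deriv f 0) =o[𝓝 0] fun _ => (1 : 𝕜) :=
      (isLittleO_one_iff 𝕜).mpr (tendsto_sub_nhds_zero_iff.mpr hf'.tendsto)
    simpa using this.mul_isBigO (isBigO_refl (fun z => z) _)
  exact (hlin.sub hvar).congr_left fun z => by ring

noncomputable def hessianNormSqDivTwo (f : ℂ → ℂ) (z : ℂ) : ℂ →L[ℝ] ℂ :=
  mulAddMulConjCLM (conj (deriv f z) * deriv f z) (f z * conj (deriv (deriv f) z))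

lemma AnalyticAt.gradient_norm_sq_div_two {f : ℂ → ℂ} {z : ℂ} (hf : AnalyticAt ℂ f z) :
    gradient (fun w => ‖f w‖ ^ 2 / 2) z = conj (deriv f z) * f z :=
  hf.differentiableAt.hasDerivAt.hasGradientAt_norm_sq_div_two.gradient

lemma AnalyticAt.fderiv_gradient_norm_sq_div_two {f : ℂ → ℂ} {z : ℂ} (hf : AnalyticAt ℂ f z) :
    fderiv ℝ (gradient fun w => ‖f w‖ ^ 2 / 2) z = hessianNormSqDivTwo f z := by
  have hgrad : (gradient fun w => ‖f w‖ ^ 2 / 2) =ᶠ[𝓝 z] fun w => conj (deriv f w) * f w :=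
    hf.eventually_analyticAt.mono fun w hw => hw.gradient_norm_sq_div_two
  rw [hgrad.fderiv_eq]
  exact (hf.deriv.differentiableAt.hasDerivAt.hasFDerivAt_conj_mul
    hf.differentiableAt.hasDerivAt).fderiv

lemma AnalyticAt.tendsto_hessianNormSqDivTwo {f : ℂ → ℂ} (hf : AnalyticAt ℂ f 0) (hf0 : f 0 = 0) :
    Tendsto (hessianNormSqDivTwo f) (𝓝 0)
      (𝓝 (mulAddMulConjCLM (conj (deriv f 0) * deriv f 0) 0)) := by
  have hd := hf.deriv.continuousAt.tendsto
  have hdd := hf.deriv.deriv.continuousAt.tendsto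
  have h := (((Complex.continuous_conj.tendsto _).comp hd).mul hd).mulAddMulConjCLM
    (hf.continuousAt.tendsto.mul ((Complex.continuous_conj.tendsto _).comp hdd))
  rwa [hf0, zero_mul] at h

lemma AnalyticAt.isLittleO_gradient_sub_hessian_apply {f : ℂ → ℂ} (hf : AnalyticAt ℂ f 0)
    (hf0 : f 0 = 0) :
    (fun z => conj (deriv f z) * f z - hessianNormSqDivTwo f z z) =o[𝓝 0] fun z => z := by
  have hd := hf.deriv.continuousAt
  have hlin := isLittleO_sub_deriv_mul_self hf.differentiableAt hd hf0
  have hbdd : (fun z => conj (deriv f z)) =O[𝓝 0] fun _ => (1 : ℂ) :=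
    ((Complex.continuous_conj.tendsto _).comp hd.tendsto).isBigO_one ℂ
  have hsmall : (fun z => f z * conj (deriv (deriv f) z)) =o[𝓝 0] fun _ => (1 : ℂ) := by
    refine (isLittleO_one_iff ℂ).mpr ?_
    simpa [hf0] using hf.continuousAt.tendsto.mul
      ((Complex.continuous_conj.tendsto _).comp hf.deriv.deriv.continuousAt.tendsto)
  have hconj : (fun z => conj z) =O[𝓝 (0 : ℂ)] fun z => z :=
    isBigO_of_le _ fun z => by simp
  refine ((hbdd.mul_isLittleO hlin).sub (hsmall.mul_isBigO hconj)).congr ?_ (fun z => one_mul z)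
  intro z
  simp only [hessianNormSqDivTwo, mulAddMulConjCLM_apply]
  ring

/-- If `f` is holomorphic near `0 ∈ ℂ` with `f(0) = 0` and `f′(0) ≠ 0`, and
`F(z) = |f(z)|²/2` on `ℝ² ≅ ℂ`, then the Hessian `∇²F(z) = fderiv ℝ (gradient F) z`
is invertible for all `z` near `0`, and the Newton-flow vector field satisfies
`(∇²F(z))⁻¹ ∇F(z) = z + o(|z|)` as `z → 0`. -/
theorem newton_flow_optimization_vector_field_near_simple_zero
    (f : ℂ → ℂ) (U : Set ℂ) (hU : IsOpen U) (h0 : (0 : ℂ) ∈ U)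
    (hf : DifferentiableOn ℂ f U) (hf0 : f 0 = 0) (hf'0 : deriv f 0 ≠ 0) :
    (∀ᶠ z in nhds (0 : ℂ),
      IsUnit (fderiv ℝ (gradient (fun w => ‖f w‖ ^ 2 / 2)) z)) ∧
    (fun z : ℂ =>
        Ring.inverse (fderiv ℝ (gradient (fun w => ‖f w‖ ^ 2 / 2)) z)
          (gradient (fun w => ‖f w‖ ^ 2 / 2) z) - z)
      =o[nhds (0 : ℂ)] fun z => z := by
  have han : AnalyticAt ℂ f 0 := hf.analyticAt (hU.mem_nhds h0)
  have hHess : ∀ᶠ z in 𝓝 0,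
      fderiv ℝ (gradient fun w => ‖f w‖ ^ 2 / 2) z = hessianNormSqDivTwo f z :=
    han.eventually_analyticAt.mono fun z hz => hz.fderiv_gradient_norm_sq_div_two
  have hGrad : ∀ᶠ z in 𝓝 0, gradient (fun w => ‖f w‖ ^ 2 / 2) z = conj (deriv f z) * f z :=
    han.eventually_analyticAt.mono fun z hz => hz.gradient_norm_sq_div_two
  have hH := han.tendsto_hessianNormSqDivTwo hf0
  have hunit := isUnit_mulAddMulConjCLM_zero
    (mul_ne_zero ((map_ne_zero (starRingEnd ℂ)).mpr hf'0) hf'0)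
  constructor
  · filter_upwards [hHess, hH.eventually (Units.isOpen.mem_nhds hunit)] with z hz hzunit
    rwa [hz]
  · refine ((han.isLittleO_gradient_sub_hessian_apply hf0).ring_inverse_apply_sub hH
      hunit).congr' ?_ EventuallyEq.rfl
    filter_upwards [hHess, hGrad] with z hzH hzG
    rw [hzH, hzG]
end
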